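/- The Gaussian mechanism satisfies (λ, λΔ₂²/(2σ²))-Rényi differential privacy: if f has ℓ₂-sensitivity at most Δ₂, then for any neighboring datasets X, X', the Rényi divergence of order λ between f(X)+N(0,σ²I) and f(X')+N(0,σ²I) is at most λΔ₂²/(2σ²). -/

import Mathlib

/-!
For two Gaussian densities with common variance, completing the square gives
`p_μ ^ l * p_ν ^ (1 - l) = exp (l (l - 1) (μ - ν)² / (2σ²)) * p_{l μ + (1 - l) ν}`, so the Rényi
integral of two product Gaussians factorizes over the coordinates and equals
`exp (l (l - 1) ‖μ - ν‖² / (2σ²))`. Hence the Rényi divergence of order `l` is exactly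
`l ‖μ - ν‖² / (2σ²)`, which the sensitivity bound `‖f X - f X'‖ ≤ Δ₂` controls.
-/

open MeasureTheory

noncomputable def gaussDensity (μ σ x : ℝ) : ℝ :=
  (1 / (σ * Real.sqrt (2 * Real.pi))) * Real.exp (-(x - μ) ^ 2 / (2 * σ ^ 2))

open Real

/-- `D_l(p • μ ‖ q • μ)`, written in terms of the densities `p` and `q`. -/
noncomputable def renyiDiv {α : Type*} [MeasurableSpace α] (μ : Measure α) (l : ℝ)
    (p q : α → ℝ) : ℝ :=
  1 / (l - 1) * log (∫ x, p x ^ l * q x ^ (1 - l) ∂μ)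

section GaussDensity

variable {σ : ℝ}

lemma gaussDensity_pos (hσ : 0 < σ) (μ x : ℝ) : 0 < gaussDensity μ σ x := by
  unfold gaussDensity; positivity

lemma gaussDensity_eq_gaussianPDFReal (hσ : 0 < σ) (μ : ℝ) :
    gaussDensity μ σ = ProbabilityTheory.gaussianPDFReal μ (σ ^ 2).toNNReal := by
  ext x
  have hsqrt : √(2 * π * (σ ^ 2).toNNReal) = σ * √(2 * π) := by
    rw [Real.coe_toNNReal _ (sq_nonneg σ), mul_comm, sqrt_mul (sq_nonneg σ), sqrt_sq hσ.le]
  rw [ProbabilityTheory.gaussianPDFReal, hsqrt, Real.coe_toNNReal _ (sq_nonneg σ), gaussDensity,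
    one_div]

lemma integral_gaussDensity (hσ : 0 < σ) (μ : ℝ) : ∫ x, gaussDensity μ σ x = 1 := by
  rw [gaussDensity_eq_gaussianPDFReal hσ]
  exact ProbabilityTheory.integral_gaussianPDFReal_eq_one μ (by positivity)

lemma gaussDensity_rpow_mul_rpow (hσ : 0 < σ) (l μ ν x : ℝ) :
    gaussDensity μ σ x ^ l * gaussDensity ν σ x ^ (1 - l) =
      exp (l * (l - 1) * (μ - ν) ^ 2 / (2 * σ ^ 2)) *
        gaussDensity (l * μ + (1 - l) * ν) σ x := by
  have hgeom {c : ℝ} (hc : 0 < c) (a b : ℝ) :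
      (c * exp a) ^ l * (c * exp b) ^ (1 - l) = c * exp (a * l + b * (1 - l)) := by
    rw [mul_rpow hc.le (exp_nonneg _), mul_rpow hc.le (exp_nonneg _), ← exp_mul, ← exp_mul,
      mul_mul_mul_comm, ← rpow_add hc, add_sub_cancel, rpow_one, ← exp_add]
  have hsquare : -(x - μ) ^ 2 / (2 * σ ^ 2) * l + -(x - ν) ^ 2 / (2 * σ ^ 2) * (1 - l) =
      l * (l - 1) * (μ - ν) ^ 2 / (2 * σ ^ 2) +
        -(x - (l * μ + (1 - l) * ν)) ^ 2 / (2 * σ ^ 2) := by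
    field_simp; ring
  rw [gaussDensity, gaussDensity, hgeom (by positivity), hsquare, exp_add, gaussDensity]
  ring

lemma integral_gaussDensity_rpow_mul_rpow (hσ : 0 < σ) (l μ ν : ℝ) :
    ∫ x, gaussDensity μ σ x ^ l * gaussDensity ν σ x ^ (1 - l) =
      exp (l * (l - 1) * (μ - ν) ^ 2 / (2 * σ ^ 2)) := by
  simp_rw [gaussDensity_rpow_mul_rpow hσ]
  rw [integral_const_mul, integral_gaussDensity hσ, mul_one]

lemma integral_prod_gaussDensity_rpow_mul_rpow {ι : Type*} [Fintype ι] (hσ : 0 < σ)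
    (l : ℝ) (μ ν : ι → ℝ) :
    ∫ x : ι → ℝ, (∏ i, gaussDensity (μ i) σ (x i)) ^ l *
        (∏ i, gaussDensity (ν i) σ (x i)) ^ (1 - l) =
      exp (l * (l - 1) * (∑ i, (μ i - ν i) ^ 2) / (2 * σ ^ 2)) := by
  have hprod (m : ι → ℝ) (r : ℝ) (x : ι → ℝ) :
      (∏ i, gaussDensity (m i) σ (x i)) ^ r = ∏ i, gaussDensity (m i) σ (x i) ^ r :=
    (finsetProd_rpow _ _ (fun i _ ↦ (gaussDensity_pos hσ _ _).le) r).symm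
  simp_rw [hprod, ← Finset.prod_mul_distrib]
  rw [integral_fintype_prod_volume_eq_prod
    (fun i x ↦ gaussDensity (μ i) σ x ^ l * gaussDensity (ν i) σ x ^ (1 - l))]
  simp_rw [integral_gaussDensity_rpow_mul_rpow hσ]
  rw [Finset.mul_sum, Finset.sum_div, exp_sum]

lemma renyiDiv_prod_gaussDensity {ι : Type*} [Fintype ι] {l : ℝ} (hσ : 0 < σ) (hl : l ≠ 1)
    (μ ν : ι → ℝ) :
    renyiDiv volume l (fun x : ι → ℝ ↦ ∏ i, gaussDensity (μ i) σ (x i))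
        (fun x ↦ ∏ i, gaussDensity (ν i) σ (x i)) =
      l * (∑ i, (μ i - ν i) ^ 2) / (2 * σ ^ 2) := by
  rw [renyiDiv, integral_prod_gaussDensity_rpow_mul_rpow hσ, log_exp]
  field_simp [sub_ne_zero.mpr hl]

end GaussDensity

/-- The Gaussian mechanism satisfies `(λ, λΔ₂²/(2σ²))`-Rényi differential privacy: if
`f : D → ℝ^d` has ℓ₂-sensitivity at most `Δ₂` on neighboring datasets, then for any neighboring
datasets `X, X'`, the Rényi divergence of order `λ` between `f(X) + N(0, σ²I)` and
`f(X') + N(0, σ²I)` (whose densities are products of coordinatewise Gaussian densities)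
is at most `λ Δ₂² / (2σ²)`. -/
theorem gaussian_mechanism_rdp {D : Type*} (Neighbor : D → D → Prop) (d : ℕ)
    (f : D → (Fin d → ℝ)) (Δ₂ σ l : ℝ) (hσ : 0 < σ) (hl : 1 < l)
    (hsens : ∀ X X', Neighbor X X' →
      Real.sqrt (∑ i : Fin d, (f X i - f X' i) ^ 2) ≤ Δ₂) :
    ∀ X X', Neighbor X X' →
      (1 / (l - 1)) *
          Real.log (∫ x : Fin d → ℝ,
            (∏ i : Fin d, gaussDensity (f X i) σ (x i)) ^ l *
              (∏ i : Fin d, gaussDensity (f X' i) σ (x i)) ^ (1 - l))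
        ≤ l * Δ₂ ^ 2 / (2 * σ ^ 2) := by
  intro X X' hX
  have hdist : ∑ i, (f X i - f X' i) ^ 2 ≤ Δ₂ ^ 2 := (sqrt_le_iff.mp (hsens X X' hX)).2
  change renyiDiv volume l _ _ ≤ _
  rw [renyiDiv_prod_gaussDensity hσ hl.ne' (f X) (f X')]
  gcongr
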